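/- Fix y ≠ 0. For each x ∈ ℝ let α(x) = (√((x−1)²+y²) + √((x+1)²+y²))/2 and β(x) = (√((x+1)²+y²) − √((x−1)²+y²))/2. Then for every x ∈ ℝ, the real functions α and β are differentiable in x with ∂α/∂x = β(α²−1)/(α²−β²) and ∂β/∂x = α(1−β²)/(α²−β²). -/

import Mathlib

/-!
Since `r₂² - r₁² = 4x`, one has `αβ = x`, and `α² - β² = r₁r₂`. Hence `β(α² - 1) = xα - β`
and `α(1 - β²) = α - xβ`; divided by `r₁r₂` these are `((x-1)/r₁ ± (x+1)/r₂)/2`, the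
derivatives of `α` and `β` obtained from `r₁' = (x-1)/r₁` and `r₂' = (x+1)/r₂`.
-/

/-- `α(x) = (√((x-1)²+y²) + √((x+1)²+y²))/2` as a function of `x` for fixed `y`. -/
noncomputable def alphaR (y x : ℝ) : ℝ :=
  (Real.sqrt ((x - 1) ^ 2 + y ^ 2) + Real.sqrt ((x + 1) ^ 2 + y ^ 2)) / 2

/-- `β(x) = (√((x+1)²+y²) - √((x-1)²+y²))/2` as a function of `x` for fixed `y`. -/
noncomputable def betaR (y x : ℝ) : ℝ :=
  (Real.sqrt ((x + 1) ^ 2 + y ^ 2) - Real.sqrt ((x - 1) ^ 2 + y ^ 2)) / 2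

theorem HasDerivAt.sqrt_sq_add {f : ℝ → ℝ} {f' x : ℝ} (c : ℝ) (hf : HasDerivAt f f' x)
    (hx : f x ^ 2 + c ≠ 0) :
    HasDerivAt (fun t => √(f t ^ 2 + c)) (f x * f' / √(f x ^ 2 + c)) x := by
  refine (((hf.fun_pow 2).add_const c).sqrt hx).congr_deriv ?_
  field_simp
  ring

theorem alphaR_mul_betaR (y x : ℝ) : alphaR y x * betaR y x = x := by
  unfold alphaR betaR
  linear_combination (Real.sq_sqrt (by positivity : (0 : ℝ) ≤ (x + 1) ^ 2 + y ^ 2)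
    - Real.sq_sqrt (by positivity : (0 : ℝ) ≤ (x - 1) ^ 2 + y ^ 2)) / 4

theorem alphaR_sq_sub_betaR_sq (y x : ℝ) :
    alphaR y x ^ 2 - betaR y x ^ 2 = √((x - 1) ^ 2 + y ^ 2) * √((x + 1) ^ 2 + y ^ 2) := by
  unfold alphaR betaR
  ring

section

variable {y : ℝ} (hy : y ≠ 0) (x : ℝ)
include hy

theorem hasDerivAt_sqrt_sub_one_sq_add :
    HasDerivAt (fun t => √((t - 1) ^ 2 + y ^ 2)) ((x - 1) / √((x - 1) ^ 2 + y ^ 2)) x := by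
  simpa using ((hasDerivAt_id' x).sub_const 1).sqrt_sq_add (y ^ 2) (by positivity)

theorem hasDerivAt_sqrt_add_one_sq_add :
    HasDerivAt (fun t => √((t + 1) ^ 2 + y ^ 2)) ((x + 1) / √((x + 1) ^ 2 + y ^ 2)) x := by
  simpa using ((hasDerivAt_id' x).add_const 1).sqrt_sq_add (y ^ 2) (by positivity)

theorem hasDerivAt_alphaR :
    HasDerivAt (alphaR y)
      (betaR y x * (alphaR y x ^ 2 - 1) / (alphaR y x ^ 2 - betaR y x ^ 2)) x := by
  have hnum : betaR y x * (alphaR y x ^ 2 - 1) = x * alphaR y x - betaR y x := by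
    linear_combination alphaR y x * alphaR_mul_betaR y x
  rw [hnum, alphaR_sq_sub_betaR_sq]
  refine (((hasDerivAt_sqrt_sub_one_sq_add hy x).fun_add
    (hasDerivAt_sqrt_add_one_sq_add hy x)).div_const 2).congr_deriv ?_
  unfold alphaR betaR
  field_simp
  ring

theorem hasDerivAt_betaR :
    HasDerivAt (betaR y)
      (alphaR y x * (1 - betaR y x ^ 2) / (alphaR y x ^ 2 - betaR y x ^ 2)) x := by
  have hnum : alphaR y x * (1 - betaR y x ^ 2) = alphaR y x - x * betaR y x := by
    linear_combination -betaR y x * alphaR_mul_betaR y x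
  rw [hnum, alphaR_sq_sub_betaR_sq]
  refine (((hasDerivAt_sqrt_add_one_sq_add hy x).fun_sub
    (hasDerivAt_sqrt_sub_one_sq_add hy x)).div_const 2).congr_deriv ?_
  unfold alphaR betaR
  field_simp
  ring

end

theorem stmt8 (y : ℝ) (hy : y ≠ 0) (x : ℝ) :
    HasDerivAt (alphaR y)
      (betaR y x * ((alphaR y x) ^ 2 - 1) / ((alphaR y x) ^ 2 - (betaR y x) ^ 2)) x ∧
    HasDerivAt (betaR y)
      (alphaR y x * (1 - (betaR y x) ^ 2) / ((alphaR y x) ^ 2 - (betaR y x) ^ 2)) x :=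
  ⟨hasDerivAt_alphaR hy x, hasDerivAt_betaR hy x⟩
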